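/- For every irrational α ∈ (0,1), every 1 ≤ p < ∞, and every positive integer n, the Bishop-type operator T_{φ_n,α} on L^p[0,1) defined by (T_{φ_n,α} f)(t) = φ_n(t) f({t+α}), where φ_n(t) = t·1_{[1/n,1)}(t), is nilpotent; consequently T_α is the norm limit of nilpotent operators. -/

import Mathlib

/-!
Both operators are weighted compositions `f ↦ w · (f ∘ τ)` with the rotation
`τ t = {t + α}`, which preserves Lebesgue measure on `[0,1)`. The `m`-th power of such an
operator has weight `∏_{j<m} w ∘ τ^j`. By Dirichlet's approximation theorem some multiple `kα`
lies within `0 < |δ| < 1/n` of an integer, so stepping by `kα` every orbit enters `[0,1/n)`,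
where `φₙ` vanishes, within `k (⌈1/|δ|⌉ + 1)` steps: a uniform bound, hence `S n` is nilpotent.
Since `|φₙ(t) - t| ≤ 1/n` on `[0,1)` and `τ` preserves measure, `‖S n - T‖ ≤ 1/n`.
-/

open MeasureTheory Real ENNReal

/-- Lebesgue measure restricted to `[0,1)`. -/
noncomputable def μ01 : Measure ℝ := volume.restrict (Set.Ico (0:ℝ) 1)

/-- The truncated symbol `φₙ(t) = t·1_{[1/n,1)}(t)`. -/
noncomputable def phiTrunc (n : ℕ) (t : ℝ) : ℝ :=
  if 1/(n:ℝ) ≤ t ∧ t < 1 then t else 0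

open Set Filter

section WeightedComposition

variable {X 𝕜 E : Type*} [MeasurableSpace X] {μ : Measure X} [NontriviallyNormedField 𝕜]
  [NormedAddCommGroup E] [NormedSpace 𝕜 E] {p : ℝ≥0∞} [Fact (1 ≤ p)]
  {A B : Lp E p μ →L[𝕜] Lp E p μ} {w v : X → 𝕜} {τ : X → X}

lemma coeFn_sub_apply_ae_eq_sub_smul
    (hA : ∀ f : Lp E p μ, A f =ᵐ[μ] fun t => w t • f (τ t))
    (hB : ∀ f : Lp E p μ, B f =ᵐ[μ] fun t => v t • f (τ t)) (f : Lp E p μ) :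
    (A - B) f =ᵐ[μ] fun t => (w t - v t) • f (τ t) := by
  filter_upwards [Lp.coeFn_sub (A f) (B f), hA f, hB f] with t hsub hAt hBt
  rw [sub_apply, hsub, Pi.sub_apply, hAt, hBt, sub_smul]

lemma coeFn_pow_apply_ae_eq_prod_smul (hτ : MeasurePreserving τ μ μ)
    (hA : ∀ f : Lp E p μ, A f =ᵐ[μ] fun t => w t • f (τ t)) (k : ℕ) (f : Lp E p μ) :
    (A ^ k) f =ᵐ[μ] fun t => (∏ j ∈ Finset.range k, w (τ^[j] t)) • f (τ^[k] t) := by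
  induction k generalizing f with
  | zero => simp
  | succ k ih =>
    have hAf := (hτ.iterate k).quasiMeasurePreserving.ae_eq_comp (hA f)
    rw [pow_succ, mul_apply_eq_comp]
    filter_upwards [ih (A f), hAf] with t ht hAt
    simp only [Function.comp_apply] at hAt
    rw [ht, hAt, smul_smul, Finset.prod_range_succ, Function.iterate_succ_apply']

lemma pow_eq_zero_of_ae_exists_iterate_eq_zero (hτ : MeasurePreserving τ μ μ)
    (hA : ∀ f : Lp E p μ, A f =ᵐ[μ] fun t => w t • f (τ t)) {m : ℕ}
    (hw : ∀ᵐ t ∂μ, ∃ j < m, w (τ^[j] t) = 0) : A ^ m = 0 := by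
  ext1 f
  refine Lp.ext ((coeFn_pow_apply_ae_eq_prod_smul hτ hA m f).trans ?_)
  filter_upwards [hw, Lp.coeFn_zero E p μ] with t ⟨j, hj, hwj⟩ h0
  rw [zero_apply, h0, Finset.prod_eq_zero (Finset.mem_range.2 hj) hwj, zero_smul, Pi.zero_apply]

lemma opNorm_le_of_ae_norm_le (hτ : MeasurePreserving τ μ μ)
    (hA : ∀ f : Lp E p μ, A f =ᵐ[μ] fun t => w t • f (τ t)) {C : ℝ} (hC : 0 ≤ C)
    (hw : ∀ᵐ t ∂μ, ‖w t‖ ≤ C) : ‖A‖ ≤ C := by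
  refine A.opNorm_le_bound hC fun f => ?_
  calc ‖A f‖ ≤ C * ‖Lp.compMeasurePreserving τ hτ f‖ := by
        refine Lp.norm_le_mul_norm_of_ae_le_mul ?_
        filter_upwards [hA f, hw, Lp.coeFn_compMeasurePreserving f hτ] with t hAt hwt hft
        rw [hAt, hft, norm_smul, Function.comp_apply]
        gcongr
    _ = C * ‖f‖ := by rw [Lp.norm_compMeasurePreserving]

end WeightedComposition

lemma ae_mem_Ico_μ01 : ∀ᵐ t ∂μ01, t ∈ Ico (0 : ℝ) 1 :=
  ae_restrict_mem measurableSet_Ico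

lemma measurePreserving_coe_unitAddCircle :
    MeasurePreserving ((↑) : ℝ → UnitAddCircle) μ01 volume := by
  have hIoc : μ01 = volume.restrict (Ioc 0 (0 + 1)) := by
    rw [zero_add]
    exact Measure.restrict_congr_set Ico_ae_eq_Ioc
  rw [hIoc]
  exact UnitAddCircle.measurePreserving_mk 0

lemma measurePreserving_coe_equivIco_unitAddCircle :
    MeasurePreserving (fun y : UnitAddCircle => (AddCircle.equivIco 1 0 y : ℝ)) volume μ01 := by
  have hmeas : Measurable (fun y : UnitAddCircle => (AddCircle.equivIco 1 0 y : ℝ)) :=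
    measurable_subtype_coe.comp (AddCircle.measurableEquivIco 1 0).measurable
  refine ⟨hmeas, ?_⟩
  have hmk := measurePreserving_coe_unitAddCircle
  rw [← hmk.map_eq, Measure.map_map hmeas hmk.measurable]
  conv_rhs => rw [← Measure.map_id (μ := μ01)]
  refine Measure.map_congr ?_
  filter_upwards [ae_mem_Ico_μ01] with t ht
  simp [Int.fract_eq_self.2 ht]

lemma measurePreserving_fract_add (c : ℝ) :
    MeasurePreserving (fun t => Int.fract (t + c)) μ01 μ01 := by
  have hrotation : (fun t => Int.fract (t + c)) =
      (fun y : UnitAddCircle => (AddCircle.equivIco 1 0 y : ℝ)) ∘ (· + (c : UnitAddCircle)) ∘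
        ((↑) : ℝ → UnitAddCircle) := by
    funext t
    rw [Function.comp_apply, Function.comp_apply, ← AddCircle.coe_add,
      AddCircle.coe_equivIco_mk_apply, div_one, mul_one]
  rw [hrotation]
  exact measurePreserving_coe_equivIco_unitAddCircle.comp
    ((measurePreserving_add_right volume (c : UnitAddCircle)).comp
      measurePreserving_coe_unitAddCircle)

lemma Int.fract_fract_add (x y : ℝ) : Int.fract (Int.fract x + y) = Int.fract (x + y) := by
  rw [← Int.fract_add_intCast (Int.fract x + y) ⌊x⌋, add_right_comm, Int.fract_add_floor]

lemma Int.fract_le_self_of_nonneg {x : ℝ} (hx : 0 ≤ x) : Int.fract x ≤ x :=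
  sub_le_self _ (Int.cast_nonneg (Int.floor_nonneg.2 hx))

lemma iterate_fract_add_apply {c t : ℝ} (ht : t ∈ Ico (0 : ℝ) 1) (j : ℕ) :
    (fun x => Int.fract (x + c))^[j] t = Int.fract (t + j * c) := by
  induction j with
  | zero => simp [Int.fract_eq_self.2 ht]
  | succ j ih =>
    rw [Function.iterate_succ_apply', ih, Int.fract_fract_add]
    push_cast
    ring_nf

lemma exists_fract_add_nat_mul_lt_abs {δ t : ℝ} (hδ : δ ≠ 0) (ht : t ∈ Ico (0 : ℝ) 1) :
    ∃ i < ⌈1 / |δ|⌉₊ + 1, Int.fract (t + i * δ) < |δ| := by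
  rcases hδ.lt_or_gt with hneg | hpos
  · -- walk down from `t` in steps of `|δ|` to the last point that is still `≥ 0`
    rw [abs_of_neg hneg]
    have hδ' : 0 < -δ := neg_pos.2 hneg
    refine ⟨⌊t / -δ⌋₊, Nat.lt_add_one_iff.2 ((Nat.floor_le_ceil _).trans
      (Nat.ceil_mono (div_le_div_of_nonneg_right ht.2.le hδ'.le))), ?_⟩
    have hle := Nat.floor_le (div_nonneg ht.1 hδ'.le)
    have hlt := Nat.lt_floor_add_one (t / -δ)
    rw [le_div_iff₀ hδ'] at hle
    rw [div_lt_iff₀ hδ'] at hlt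
    have hstep : ⌊t / -δ⌋₊ * δ ≤ 0 :=
      mul_nonpos_of_nonneg_of_nonpos (Nat.cast_nonneg _) hneg.le
    rw [Int.fract_eq_self.2 ⟨by linarith, by linarith [ht.2]⟩]
    linarith
  · -- walk up from `t` in steps of `δ` to the first point that is `≥ 1`
    rw [abs_of_pos hpos]
    refine ⟨⌈(1 - t) / δ⌉₊, Nat.lt_add_one_iff.2
      (Nat.ceil_mono (div_le_div_of_nonneg_right (by linarith [ht.1]) hpos.le)), ?_⟩
    have hle := (div_le_iff₀ hpos).1 (Nat.le_ceil ((1 - t) / δ))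
    have hlt : ((⌈(1 - t) / δ⌉₊ : ℝ) - 1) * δ < 1 - t := by
      rw [← lt_div_iff₀ hpos]
      linarith [Nat.ceil_lt_add_one (div_nonneg (sub_nonneg.2 ht.2.le) hpos.le)]
    calc Int.fract (t + ⌈(1 - t) / δ⌉₊ * δ)
        = Int.fract (t + ⌈(1 - t) / δ⌉₊ * δ - 1) := (Int.fract_sub_one _).symm
      _ ≤ t + ⌈(1 - t) / δ⌉₊ * δ - 1 := Int.fract_le_self_of_nonneg (by linarith)
      _ < δ := by linarith

lemma Irrational.exists_nat_mul_sub_round {α ε : ℝ} (hα : Irrational α) (hε : 0 < ε) :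
    ∃ k : ℕ, 0 < k ∧ k * α - round (k * α) ≠ 0 ∧ |k * α - round (k * α)| < ε := by
  obtain ⟨N, hN⟩ := exists_nat_gt (1 / ε)
  obtain ⟨k, hk, -, hkα⟩ := Real.exists_nat_abs_mul_sub_round_le α (n := N + 1) N.succ_pos
  refine ⟨k, hk, sub_ne_zero.2 ((hα.natCast_mul hk.ne').ne_int _), hkα.trans_lt ?_⟩
  rw [div_lt_iff₀ hε] at hN
  rw [div_lt_iff₀ (by positivity)]
  push_cast
  nlinarith

lemma Irrational.exists_forall_exists_fract_add_nat_mul_lt {α ε : ℝ} (hα : Irrational α)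
    (hε : 0 < ε) :
    ∃ m : ℕ, ∀ t ∈ Ico (0 : ℝ) 1, ∃ j < m, Int.fract (t + j * α) < ε := by
  obtain ⟨k, hk, hδ, hδε⟩ := hα.exists_nat_mul_sub_round hε
  refine ⟨(⌈1 / |k * α - round (k * α)|⌉₊ + 1) * k, fun t ht => ?_⟩
  obtain ⟨i, hi, hfract⟩ := exists_fract_add_nat_mul_lt_abs hδ ht
  refine ⟨i * k, Nat.mul_lt_mul_of_pos_right hi hk, ?_⟩
  have hshift : t + ((i * k : ℕ) : ℝ) * α =
      t + i * (k * α - round (k * α)) + ((i * round (k * α) : ℤ) : ℝ) := by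
    push_cast
    ring
  rw [hshift, Int.fract_add_intCast]
  exact hfract.trans hδε

lemma phiTrunc_eq_zero_of_lt {n : ℕ} {t : ℝ} (ht : t < 1 / n) : phiTrunc n t = 0 :=
  if_neg fun h => (h.1.trans_lt ht).false

lemma abs_phiTrunc_sub_le {n : ℕ} {t : ℝ} (ht : t ∈ Ico (0 : ℝ) 1) :
    |phiTrunc n t - t| ≤ 1 / n := by
  by_cases hlt : t < 1 / n
  · rw [phiTrunc_eq_zero_of_lt hlt, zero_sub, abs_neg, abs_of_nonneg ht.1]
    exact hlt.le
  · rw [phiTrunc, if_pos ⟨not_lt.1 hlt, ht.2⟩, sub_self, abs_zero]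
    positivity

theorem stmt2_general (p : ℝ≥0∞) [Fact (1 ≤ p)]
    (α : ℝ) (hα : Irrational α)
    (T : Lp ℂ p μ01 →L[ℂ] Lp ℂ p μ01)
    (hT : ∀ f : Lp ℂ p μ01,
      (T f : ℝ → ℂ) =ᵐ[μ01] fun t => (t : ℂ) * f (Int.fract (t + α)))
    (S : ℕ → Lp ℂ p μ01 →L[ℂ] Lp ℂ p μ01)
    (hS : ∀ n : ℕ, 1 ≤ n → ∀ f : Lp ℂ p μ01,
      (S n f : ℝ → ℂ) =ᵐ[μ01] fun t => (phiTrunc n t : ℂ) * f (Int.fract (t + α))) :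
    (∀ n : ℕ, 1 ≤ n → IsNilpotent (S n)) ∧
    Filter.Tendsto (fun n => ‖S n - T‖) Filter.atTop (nhds 0) := by
  have hτ := measurePreserving_fract_add α
  refine ⟨fun n hn => ?_, ?_⟩
  · obtain ⟨m, hm⟩ :=
      hα.exists_forall_exists_fract_add_nat_mul_lt (ε := 1 / n) (by positivity)
    refine ⟨m, pow_eq_zero_of_ae_exists_iterate_eq_zero hτ (w := fun t => (phiTrunc n t : ℂ))
      (hS n hn) ?_⟩
    filter_upwards [ae_mem_Ico_μ01] with t ht
    obtain ⟨j, hj, hsmall⟩ := hm t ht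
    refine ⟨j, hj, ?_⟩
    rw [iterate_fract_add_apply ht, phiTrunc_eq_zero_of_lt hsmall, Complex.ofReal_zero]
  · have hnorm (n : ℕ) (hn : 1 ≤ n) : ‖S n - T‖ ≤ 1 / n := by
      refine opNorm_le_of_ae_norm_le hτ (coeFn_sub_apply_ae_eq_sub_smul (hS n hn) hT)
        (by positivity) ?_
      filter_upwards [ae_mem_Ico_μ01] with t ht
      rw [← Complex.ofReal_sub, Complex.norm_real, Real.norm_eq_abs]
      exact abs_phiTrunc_sub_le ht
    exact squeeze_zero' (Eventually.of_forall fun n => norm_nonneg _)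
      (eventually_atTop.2 ⟨1, hnorm⟩) tendsto_one_div_atTop_nhds_zero_nat

theorem stmt2 (p : ℝ≥0∞) [Fact (1 ≤ p)] (hp : p ≠ ⊤)
    (α : ℝ) (hα : Irrational α) (hα0 : 0 < α) (hα1 : α < 1)
    (T : Lp ℂ p μ01 →L[ℂ] Lp ℂ p μ01)
    (hT : ∀ f : Lp ℂ p μ01,
      (T f : ℝ → ℂ) =ᵐ[μ01] fun t => (t : ℂ) * f (Int.fract (t + α)))
    (S : ℕ → Lp ℂ p μ01 →L[ℂ] Lp ℂ p μ01)
    (hS : ∀ n : ℕ, 1 ≤ n → ∀ f : Lp ℂ p μ01,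
      (S n f : ℝ → ℂ) =ᵐ[μ01] fun t => (phiTrunc n t : ℂ) * f (Int.fract (t + α))) :
    (∀ n : ℕ, 1 ≤ n → IsNilpotent (S n)) ∧
    Filter.Tendsto (fun n => ‖S n - T‖) Filter.atTop (nhds 0) :=
  stmt2_general p α hα T hT S hS
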